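/- Explicit expansion of the basis elements (from the proof of the highest-degree-term lemma, Section 5.4 of the paper): for all natural numbers p,q,ℓ with ℓ ≤ p+q, one has (ad J₋)^ℓ(a₊^p b₋^q) = ε^ℓ · Σ_s (−1)^(ℓ−s) · (ℓ!·p!·q!)/(s!·(ℓ−s)!·(p−s)!·(q−ℓ+s)!) · a₊^(p−s) ∘ b₊^s ∘ a₋^(ℓ−s) ∘ b₋^(q−ℓ+s), where the sum runs over natural numbers s with max(0, ℓ−q) ≤ s ≤ min(ℓ, p). -/
import Mathlib


open MvPolynomial

noncomputable section

/-- The polynomial ring ℂ[x,y]. -/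
abbrev P2 : Type := MvPolynomial (Fin 2) ℂ

/-- The algebra of ℂ-linear endomorphisms of ℂ[x,y]. -/
abbrev E : Type := Module.End ℂ P2

/-- `a₊` : multiplication by `x`. -/
def aP : E := LinearMap.mulLeft ℂ (X 0 : P2)

/-- `b₊` : multiplication by `y`. -/
def bP : E := LinearMap.mulLeft ℂ (X 1 : P2)

/-- `a₋ = ε ∂/∂x`. -/
def aM (ε : ℝ) : E := (ε : ℂ) • (pderiv (0 : Fin 2)).toLinearMap

/-- `b₋ = ε ∂/∂y`. -/
def bM (ε : ℝ) : E := (ε : ℂ) • (pderiv (1 : Fin 2)).toLinearMap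

def J0 (ε : ℝ) : E := (1/2 : ℂ) • (aP * aM ε - bP * bM ε)
def Jp (ε : ℝ) : E := aP * bM ε
def Jm (ε : ℝ) : E := aM ε * bP
def K0 (ε : ℝ) : E := (1/2 : ℂ) • (aP * aM ε + bP * bM ε + (ε : ℂ) • (1 : E))
def Kp : E := aP * bP
def Km (ε : ℝ) : E := aM ε * bM ε

/-- `(ad J₋)(w) = J₋w − wJ₋`. -/
def adJm (ε : ℝ) (w : E) : E := Jm ε * w - w * Jm ε

/-- `η(p,q,ℓ) = (ad J₋)^ℓ (a₊^p b₋^q)`. -/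
def eta (ε : ℝ) (p q ℓ : ℕ) : E := (adJm ε)^[ℓ] (aP ^ p * bM ε ^ q)

lemma pd_comm (i j : Fin 2) (f : P2) : pderiv i (pderiv j f) = pderiv j (pderiv i f) := by
  induction f using MvPolynomial.induction_on with
  | C a => simp
  | add p q hp hq => simp [hp, hq]
  | mul_X p k hp =>
      simp [pderiv_mul, hp, Pi.single_apply, apply_ite (pderiv i), apply_ite (pderiv j)]
      ring

lemma aM_aP (ε : ℝ) : aM ε * aP = aP * aM ε + (ε : ℂ) • 1 := by
  refine LinearMap.ext fun f => ?_
  simp [aM, aP, Module.End.mul_apply, pderiv_mul]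

lemma bM_bP (ε : ℝ) : bM ε * bP = bP * bM ε + (ε : ℂ) • 1 := by
  refine LinearMap.ext fun f => ?_
  simp [bM, bP, Module.End.mul_apply, pderiv_mul]

lemma comm_aP_bP : Commute aP bP := by
  refine LinearMap.ext fun f => ?_
  simp [aP, bP, Module.End.mul_apply]; ring

lemma comm_aP_bM (ε : ℝ) : Commute aP (bM ε) := by
  refine LinearMap.ext fun f => ?_
  simp [aP, bM, Module.End.mul_apply, pderiv_mul]

lemma comm_aM_bP (ε : ℝ) : Commute (aM ε) bP := by
  refine LinearMap.ext fun f => ?_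
  simp [aM, bP, Module.End.mul_apply, pderiv_mul]

lemma comm_aM_bM (ε : ℝ) : Commute (aM ε) (bM ε) := by
  refine LinearMap.ext fun f => ?_
  simp only [aM, bM, Module.End.mul_apply, LinearMap.smul_apply, map_smul]
  exact congrArg _ (congrArg _ (pd_comm 0 1 f))

lemma aM_aP_pow (ε : ℝ) (A : ℕ) :
    aM ε * aP ^ A = aP ^ A * aM ε + ((A : ℂ) * ε) • aP ^ (A - 1) := by
  induction A with
  | zero => simp
  | succ A ih =>
    rw [pow_succ, ← mul_assoc, ih, add_mul, mul_assoc, aM_aP, mul_add, ← mul_assoc,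
      ← pow_succ, smul_mul_assoc]
    rcases Nat.eq_zero_or_pos A with h | h
    · subst h
      simp only [pow_zero, pow_one, one_mul, mul_one, Nat.cast_zero, Nat.cast_one,
        zero_mul, zero_smul, add_zero, Nat.zero_add, Nat.add_sub_cancel, one_mul]
      simp
    · rw [← pow_succ, Nat.sub_add_cancel h, Nat.add_sub_cancel]
      rw [mul_smul_comm, mul_one, add_assoc, ← add_smul]
      congr 1
      push_cast
      ring

lemma bM_pow_bP (ε : ℝ) (D : ℕ) :
    bM ε ^ D * bP = bP * bM ε ^ D + ((D : ℂ) * ε) • bM ε ^ (D - 1) := by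
  induction D with
  | zero => simp
  | succ D ih =>
    rw [pow_succ, mul_assoc, bM_bP, mul_add, ← mul_assoc, ih, add_mul, mul_assoc,
      smul_mul_assoc, ← pow_succ]
    rcases Nat.eq_zero_or_pos D with h | h
    · subst h
      simp only [pow_zero, pow_one, one_mul, mul_one, Nat.cast_zero, Nat.cast_one,
        zero_mul, zero_smul, add_zero, Nat.zero_add, Nat.add_sub_cancel]
      simp
    · rw [← pow_succ, Nat.sub_add_cancel h, Nat.add_sub_cancel, mul_smul_comm, mul_one,
        add_assoc, ← add_smul]
      congr 1
      push_cast
      ring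

/-- normal-ordered monomial -/

def NN (ε : ℝ) (A B C D : ℕ) : E := aP ^ A * bP ^ B * aM ε ^ C * bM ε ^ D

lemma Jm_mul_NN (ε : ℝ) (A B C D : ℕ) :
    Jm ε * NN ε A B C D
      = NN ε A (B + 1) (C + 1) D + ((A : ℂ) * ε) • NN ε (A - 1) (B + 1) C D := by
  have h1 : Commute bP (aP ^ A) := (comm_aP_bP.symm.pow_right A)
  have h2 : Commute (aM ε) (bP ^ (B + 1)) := (comm_aM_bP ε).pow_right (B + 1)
  simp only [NN, Jm, mul_assoc]
  rw [h1.left_comm, ← mul_assoc bP, ← pow_succ']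
  rw [← mul_assoc (aM ε) (aP ^ A), aM_aP_pow, add_mul, smul_mul_assoc]
  simp only [mul_assoc]
  rw [h2.left_comm, ← mul_assoc (aM ε), ← pow_succ']

lemma NN_mul_Jm (ε : ℝ) (A B C D : ℕ) :
    NN ε A B C D * Jm ε
      = NN ε A (B + 1) (C + 1) D + ((D : ℂ) * ε) • NN ε A B (C + 1) (D - 1) := by
  have h1 : Commute (bM ε ^ D) (aM ε) := ((comm_aM_bM ε).pow_right D).symm
  have h2 : Commute bP (aM ε ^ (C + 1)) := ((comm_aM_bP ε).pow_left (C + 1)).symm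
  simp only [NN, Jm, mul_assoc]
  rw [h1.left_comm, ← mul_assoc (aM ε ^ C), ← pow_succ]
  rw [bM_pow_bP, mul_add, mul_smul_comm, ← h2.left_comm]
  simp only [mul_add, mul_smul_comm]
  rw [← mul_assoc (bP ^ B) bP, ← pow_succ]

lemma adJm_NN (ε : ℝ) (A B C D : ℕ) :
    adJm ε (NN ε A B C D)
      = ((A : ℂ) * ε) • NN ε (A-1) (B+1) C D - ((D : ℂ) * ε) • NN ε A B (C+1) (D-1) := by
  rw [adJm, Jm_mul_NN, NN_mul_Jm]
  abel

def nn (p q ℓ s : ℕ) : ℕ := ℓ.choose s * p.descFactorial s * q.descFactorial (ℓ - s)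

def cc (p q ℓ s : ℕ) : ℂ := (-1) ^ (ℓ - s) * (nn p q ℓ s : ℂ)

lemma adJm_smul (ε : ℝ) (c : ℂ) (w : E) : adJm ε (c • w) = c • adJm ε w := by
  simp [adJm, mul_smul_comm, smul_mul_assoc, smul_sub]

lemma adJm_sum (ε : ℝ) {ι : Type*} (s : Finset ι) (f : ι → E) :
    adJm ε (∑ i ∈ s, f i) = ∑ i ∈ s, adJm ε (f i) := by
  simp [adJm, Finset.mul_sum, Finset.sum_mul, Finset.sum_sub_distrib]

lemma n_rec (p q ℓ t : ℕ) (ht : t ≤ ℓ) :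
    nn p q (ℓ+1) (t+1)
      = (p - t) * nn p q ℓ t + (q + (t+1) - ℓ) * nn p q ℓ (t+1) := by
  unfold nn
  rcases Nat.lt_or_ge t ℓ with h | h
  · have hk : ℓ - t = (ℓ - (t+1)) + 1 := by omega
    have hq : q - (ℓ - (t+1)) = q + (t+1) - ℓ := by omega
    rw [Nat.choose_succ_succ, Nat.succ_sub_succ, Nat.descFactorial_succ, hk,
      Nat.descFactorial_succ, hq]
    ring
  · have : t = ℓ := le_antisymm ht h
    subst this
    simp [Nat.choose_succ_self, Nat.descFactorial_succ, Nat.sub_self]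

lemma sum_shift (n : ℕ) (M : ℕ → E) (F G H : ℕ → ℂ)
    (h0 : H 0 = -G 0) (hs : ∀ t, t ≤ n → H (t+1) = F t - G (t+1))
    (hGn : G (n+1) = 0) :
    ∑ s ∈ Finset.range (n+1), (F s • M (s+1) - G s • M s)
      = ∑ s ∈ Finset.range (n+2), H s • M s := by
  have h1 : ∑ s ∈ Finset.range (n+2), (if s = 0 then (0:E) else F (s-1) • M s)
      = ∑ s ∈ Finset.range (n+1), F s • M (s+1) := by
    rw [Finset.sum_range_succ']
    simp
  have h2 : ∑ s ∈ Finset.range (n+2), G s • M s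
      = ∑ s ∈ Finset.range (n+1), G s • M s := by
    rw [Finset.sum_range_succ, hGn, zero_smul, add_zero]
  rw [Finset.sum_sub_distrib, ← h1, ← h2, ← Finset.sum_sub_distrib]
  refine Finset.sum_congr rfl fun s hsmem => ?_
  rcases s with _ | t
  · rw [h0]
    simp only [reduceIte]
    module
  · have ht : t ≤ n := by
      have := Finset.mem_range.mp hsmem; omega
    simp only [Nat.succ_ne_zero, if_false, Nat.add_sub_cancel]
    rw [hs t ht]
    module

lemma coef_step (ε : ℝ) (p q ℓ t : ℕ) (ht : t ≤ ℓ) :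
    (ε:ℂ)^(ℓ+1) * cc p q (ℓ+1) (t+1)
      = ((ε:ℂ)^ℓ * cc p q ℓ t) * (((p-t : ℕ):ℂ) * ε)
        - ((ε:ℂ)^ℓ * cc p q ℓ (t+1)) * (((q+(t+1)-ℓ : ℕ):ℂ) * ε) := by
  have hn : ((nn p q (ℓ+1) (t+1) : ℕ) : ℂ)
      = ((p - t : ℕ) : ℂ) * (nn p q ℓ t : ℂ)
        + ((q + (t+1) - ℓ : ℕ) : ℂ) * (nn p q ℓ (t+1) : ℂ) := by
    exact_mod_cast congrArg (Nat.cast : ℕ → ℂ) (n_rec p q ℓ t ht)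
  have hsgn : ((-1:ℂ))^(ℓ-(t+1)) * (nn p q ℓ (t+1) : ℂ)
      = -(((-1:ℂ))^(ℓ-t) * (nn p q ℓ (t+1) : ℂ)) := by
    rcases eq_or_lt_of_le ht with rfl | h
    · simp [nn, Nat.choose_succ_self]
    · rw [show ℓ - t = (ℓ-(t+1))+1 from by omega, pow_succ]; ring
  unfold cc
  rw [Nat.succ_sub_succ, hsgn]
  linear_combination ((ε:ℂ)^(ℓ+1) * (-1:ℂ)^(ℓ-t)) * hn

lemma eta_range (ε : ℝ) (p q ℓ : ℕ) :
    eta ε p q ℓ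
      = ∑ s ∈ Finset.range (ℓ+1),
          ((ε:ℂ)^ℓ * cc p q ℓ s) • NN ε (p-s) s (ℓ-s) (q+s-ℓ) := by
  induction ℓ with
  | zero =>
    simp [eta, NN, cc, nn]
  | succ ℓ ih =>
    rw [eta, Function.iterate_succ_apply', ← eta, ih, adJm_sum]
    have step : ∀ s ∈ Finset.range (ℓ+1),
        adJm ε (((ε:ℂ)^ℓ * cc p q ℓ s) • NN ε (p-s) s (ℓ-s) (q+s-ℓ))
          = (((ε:ℂ)^ℓ * cc p q ℓ s) * (((p-s : ℕ):ℂ) * ε)) •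
              NN ε (p-(s+1)) (s+1) ((ℓ+1)-(s+1)) (q+(s+1)-(ℓ+1))
            - (((ε:ℂ)^ℓ * cc p q ℓ s) * (((q+s-ℓ : ℕ):ℂ) * ε)) •
              NN ε (p-s) s ((ℓ+1)-s) (q+s-(ℓ+1)) := by
      intro s hs
      have hsl : s ≤ ℓ := Nat.lt_succ_iff.mp (Finset.mem_range.mp hs)
      have m1 : NN ε (p-s-1) (s+1) (ℓ-s) (q+s-ℓ)
          = NN ε (p-(s+1)) (s+1) ((ℓ+1)-(s+1)) (q+(s+1)-(ℓ+1)) := by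
        rw [show p-s-1 = p-(s+1) from by omega]
        rw [show ℓ-s = (ℓ+1)-(s+1) from by omega]
        rw [show q+s-ℓ = q+(s+1)-(ℓ+1) from by omega]
      have m2 : NN ε (p-s) s ((ℓ-s)+1) ((q+s-ℓ)-1)
          = NN ε (p-s) s ((ℓ+1)-s) (q+s-(ℓ+1)) := by
        rw [show (ℓ-s)+1 = (ℓ+1)-s from by omega]
        rw [show (q+s-ℓ)-1 = q+s-(ℓ+1) from by omega]
      rw [adJm_smul, adJm_NN, m1, m2, smul_sub, smul_smul, smul_smul]
    rw [Finset.sum_congr rfl step]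
    refine sum_shift ℓ (fun t => NN ε (p-t) t ((ℓ+1)-t) (q+t-(ℓ+1)))
      (fun s => ((ε:ℂ)^ℓ * cc p q ℓ s) * (((p-s : ℕ):ℂ) * ε))
      (fun s => ((ε:ℂ)^ℓ * cc p q ℓ s) * (((q+s-ℓ : ℕ):ℂ) * ε))
      (fun s => (ε:ℂ)^(ℓ+1) * cc p q (ℓ+1) s) ?_ ?_ ?_
    · -- H 0 = -G 0
      simp only [cc, nn, Nat.sub_zero, Nat.add_zero, Nat.choose_zero_right,
        Nat.descFactorial_zero, one_mul, mul_one, Nat.descFactorial_succ, pow_succ]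
      push_cast
      ring
    · intro t ht
      exact coef_step ε p q ℓ t ht
    · have : nn p q ℓ (ℓ+1) = 0 := by
        simp [nn, Nat.choose_succ_self]
      simp [cc, this]

/-- Explicit expansion of the basis elements (Section 5.4):
`(ad J₋)^ℓ(a₊^p b₋^q) = ε^ℓ Σ_s (−1)^(ℓ−s) ℓ!p!q!/(s!(ℓ−s)!(p−s)!(q−ℓ+s)!)
· a₊^(p−s) b₊^s a₋^(ℓ−s) b₋^(q−ℓ+s)`, summed over `max(0,ℓ−q) ≤ s ≤ min(ℓ,p)`. -/
theorem eta_explicit_expansion (ε : ℝ) (p q ℓ : ℕ) (hℓ : ℓ ≤ p + q) :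
    eta ε p q ℓ =
      (ε : ℂ) ^ ℓ • ∑ s ∈ Finset.Icc (ℓ - q) (min ℓ p),
        (((-1 : ℂ) ^ (ℓ - s) *
            ((ℓ.factorial * p.factorial * q.factorial : ℕ) : ℂ)) /
          ((s.factorial * (ℓ - s).factorial * (p - s).factorial *
              (q + s - ℓ).factorial : ℕ) : ℂ)) •
        (aP ^ (p - s) * bP ^ s * aM ε ^ (ℓ - s) * bM ε ^ (q + s - ℓ)) := by
  rw [eta_range]
  have hsub : Finset.Icc (ℓ - q) (min ℓ p) ⊆ Finset.range (ℓ + 1) := by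
    intro s hs
    simp only [Finset.mem_Icc, Finset.mem_range] at hs ⊢
    omega
  have hzero : ∀ s ∈ Finset.range (ℓ + 1), s ∉ Finset.Icc (ℓ - q) (min ℓ p) →
      ((ε:ℂ)^ℓ * cc p q ℓ s) • NN ε (p - s) s (ℓ - s) (q + s - ℓ) = 0 := by
    intro s hs hns
    simp only [Finset.mem_range] at hs
    simp only [Finset.mem_Icc, not_and_or, not_le] at hns
    have hnn : nn p q ℓ s = 0 := by
      unfold nn
      rcases hns with h | h
      · rw [Nat.descFactorial_eq_zero_iff_lt.mpr (show q < ℓ - s by omega), mul_zero]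
      · rw [Nat.descFactorial_eq_zero_iff_lt.mpr (show p < s by omega)]
        ring
    simp [cc, hnn]
  rw [← Finset.sum_subset hsub hzero, Finset.smul_sum]
  refine Finset.sum_congr rfl fun s hs => ?_
  have hmem := Finset.mem_Icc.mp hs
  have hsp : s ≤ p := le_trans hmem.2 (min_le_right _ _)
  have hsl : s ≤ ℓ := le_trans hmem.2 (min_le_left _ _)
  have hlq : ℓ - s ≤ q := by omega
  rw [smul_smul]
  have hD : ((s.factorial * (ℓ - s).factorial * (p - s).factorial *
      (q + s - ℓ).factorial : ℕ) : ℂ) ≠ 0 := by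
    refine Nat.cast_ne_zero.mpr ?_
    positivity
  have hNat : nn p q ℓ s * (s.factorial * (ℓ - s).factorial * (p - s).factorial *
      (q + s - ℓ).factorial) = ℓ.factorial * p.factorial * q.factorial := by
    have e1 := Nat.choose_mul_factorial_mul_factorial hsl
    have e2 := Nat.factorial_mul_descFactorial hsp
    have e3 : (q - (ℓ - s)).factorial * q.descFactorial (ℓ - s) = q.factorial :=
      Nat.factorial_mul_descFactorial hlq
    have e4 : q + s - ℓ = q - (ℓ - s) := by omega
    calc (ℓ.choose s * p.descFactorial s * q.descFactorial (ℓ - s)) *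
          (s.factorial * (ℓ - s).factorial * (p - s).factorial * (q + s - ℓ).factorial)
        = (ℓ.choose s * s.factorial * (ℓ - s).factorial) *
            ((p - s).factorial * p.descFactorial s) *
            ((q + s - ℓ).factorial * q.descFactorial (ℓ - s)) := by ring
      _ = ℓ.factorial * p.factorial * q.factorial := by rw [e1, e2, e4, e3]
  have hcc : cc p q ℓ s
      = ((-1 : ℂ) ^ (ℓ - s) *
            ((ℓ.factorial * p.factorial * q.factorial : ℕ) : ℂ)) /
          ((s.factorial * (ℓ - s).factorial * (p - s).factorial *
              (q + s - ℓ).factorial : ℕ) : ℂ) := by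
    rw [mul_div_assoc, cc]
    congr 1
    rw [eq_div_iff hD]
    exact_mod_cast congrArg (Nat.cast : ℕ → ℂ) hNat
  rw [hcc]
  rfl
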